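/- arXiv:2503.21077 — 4 statements merged into one kernel-verified Lean document; each statement's English description precedes it below -/
import Mathlib

section
/- Let R₁, R₂, R₃ be elements of an associative ring satisfying [R₁, R₂] = -R₃, [R₁, R₃] = 0, and [R₂, R₃] = 0. Then for positive integers i, j, [R₂^j, R₁^i] = Σ_{k=1}^{min(i,j)} k! · C(i,k) · C(j,k) · R₃^k R₁^{i-k} R₂^{j-k}. -/
open Finset

lemma my_key {R : Type*} [Ring R] (R₁ R₂ R₃ : R)
    (h12 : R₁ * R₂ - R₂ * R₁ = -R₃)
    (h13 : R₁ * R₃ - R₃ * R₁ = 0) :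
    ∀ m : ℕ, R₂ * R₁ ^ m = R₁ ^ m * R₂ + m • (R₃ * R₁ ^ (m - 1)) := by
  have e0 : R₂ * R₁ - R₁ * R₂ = R₃ := by rw [← neg_sub, h12, neg_neg]
  rw [sub_eq_iff_eq_add] at e0
  have e : R₂ * R₁ = R₁ * R₂ + R₃ := by rw [e0, add_comm]
  have c : Commute R₁ R₃ := sub_eq_zero.mp h13
  have main : ∀ m : ℕ, R₂ * R₁ ^ (m + 1) = R₁ ^ (m + 1) * R₂ + (m + 1) • (R₃ * R₁ ^ m) := by
    intro m
    induction m with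
    | zero => simpa using e
    | succ n ih =>
      calc R₂ * R₁ ^ (n + 2) = (R₂ * R₁ ^ (n + 1)) * R₁ := by rw [pow_succ, mul_assoc]
      _ = (R₁ ^ (n + 1) * R₂ + (n + 1) • (R₃ * R₁ ^ n)) * R₁ := by rw [ih]
      _ = R₁ ^ (n + 1) * (R₂ * R₁) + (n + 1) • (R₃ * R₁ ^ (n + 1)) := by
            rw [add_mul, smul_mul_assoc, mul_assoc, mul_assoc, ← pow_succ]
      _ = R₁ ^ (n + 2) * R₂ + (R₁ ^ (n + 1) * R₃ + (n + 1) • (R₃ * R₁ ^ (n + 1))) := by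
            rw [e, mul_add, ← mul_assoc, ← pow_succ, add_assoc]
      _ = R₁ ^ (n + 2) * R₂ + (n + 2) • (R₃ * R₁ ^ (n + 1)) := by
            rw [← (c.symm.pow_right (n+1)).eq]; congr 1; conv_rhs => rw [succ_nsmul']
  intro m
  match m with
  | 0 => simp
  | Nat.succ n => simpa using main n

lemma my_coeff (i j m : ℕ) :
    (m+1).factorial * i.choose (m+1) * (j+1).choose (m+1)
      = (m+1).factorial * i.choose (m+1) * j.choose (m+1)
        + (i - m) * (m.factorial * i.choose m * j.choose m) := by
  rw [Nat.choose_succ_succ', Nat.mul_add, add_comm]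
  congr 1
  rw [Nat.factorial_succ]
  have h := Nat.choose_succ_right_eq i m
  calc (m + 1) * m.factorial * i.choose (m + 1) * j.choose m
      = m.factorial * (i.choose (m+1) * (m+1)) * j.choose m := by ring
    _ = m.factorial * (i.choose m * (i - m)) * j.choose m := by rw [h]
    _ = (i - m) * (m.factorial * i.choose m * j.choose m) := by ring

lemma my_term {R : Type*} [Ring R] (R₁ R₂ R₃ : R)
    (h12 : R₁ * R₂ - R₂ * R₁ = -R₃)
    (h13 : R₁ * R₃ - R₃ * R₁ = 0)
    (h23 : R₂ * R₃ - R₃ * R₂ = 0)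
    (i j k : ℕ) :
    (k.factorial * i.choose k * j.choose k) • (R₂ * (R₃ ^ k * R₁ ^ (i - k) * R₂ ^ (j - k)))
      = (k.factorial * i.choose k * j.choose k) • (R₃ ^ k * R₁ ^ (i - k) * R₂ ^ (j + 1 - k))
        + ((i - k) * (k.factorial * i.choose k * j.choose k)) •
            (R₃ ^ (k + 1) * R₁ ^ (i - (k + 1)) * R₂ ^ (j + 1 - (k + 1))) := by
  rcases le_or_gt k j with hkj | hkj
  · have c23 : Commute R₂ R₃ := sub_eq_zero.mp h23
    have hc : R₂ * R₃ ^ k = R₃ ^ k * R₂ := (c23.pow_right k).eq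
    have hB := my_key R₁ R₂ R₃ h12 h13 (i - k)
    have hpow : R₂ * R₂ ^ (j - k) = R₂ ^ (j + 1 - k) := by
      rw [← pow_succ']; congr 1; omega
    have h1 : i - (k + 1) = i - k - 1 := by omega
    have h2 : j + 1 - (k + 1) = j - k := by omega
    have expand : R₂ * (R₃ ^ k * R₁ ^ (i - k) * R₂ ^ (j - k))
        = R₃ ^ k * R₁ ^ (i - k) * R₂ ^ (j + 1 - k)
          + (i - k) • (R₃ ^ (k + 1) * R₁ ^ (i - (k + 1)) * R₂ ^ (j + 1 - (k + 1))) := by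
      rw [h1, h2]
      calc R₂ * (R₃ ^ k * R₁ ^ (i - k) * R₂ ^ (j - k))
          = (R₂ * R₃ ^ k) * R₁ ^ (i - k) * R₂ ^ (j - k) := by simp only [mul_assoc]
        _ = R₃ ^ k * ((R₂ * R₁ ^ (i - k)) * R₂ ^ (j - k)) := by rw [hc]; simp only [mul_assoc]
        _ = R₃ ^ k * ((R₁ ^ (i - k) * R₂ + (i - k) • (R₃ * R₁ ^ (i - k - 1))) * R₂ ^ (j - k)) := by
            rw [hB]
        _ = R₃ ^ k * (R₁ ^ (i - k) * (R₂ * R₂ ^ (j - k)))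
              + (i - k) • (R₃ ^ k * (R₃ * R₁ ^ (i - k - 1)) * R₂ ^ (j - k)) := by
            rw [add_mul, mul_add, smul_mul_assoc, mul_smul_comm]; simp only [mul_assoc]
        _ = R₃ ^ k * R₁ ^ (i - k) * R₂ ^ (j + 1 - k)
              + (i - k) • (R₃ ^ (k + 1) * R₁ ^ (i - k - 1) * R₂ ^ (j - k)) := by
            rw [hpow, ← mul_assoc, ← mul_assoc, ← pow_succ]
    rw [expand, smul_add, smul_smul]
    congr 2
    exact Nat.mul_comm _ _
  · have hz : j.choose k = 0 := Nat.choose_eq_zero_of_lt hkj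
    simp [hz]

lemma my_main {R : Type*} [Ring R] (R₁ R₂ R₃ : R)
    (h12 : R₁ * R₂ - R₂ * R₁ = -R₃)
    (h13 : R₁ * R₃ - R₃ * R₁ = 0)
    (h23 : R₂ * R₃ - R₃ * R₂ = 0)
    (i : ℕ) : ∀ j : ℕ, R₂ ^ j * R₁ ^ i
      = ∑ k ∈ Finset.range (i + 1),
          (k.factorial * i.choose k * j.choose k) • (R₃ ^ k * R₁ ^ (i - k) * R₂ ^ (j - k)) := by
  intro j
  induction j with
  | zero =>
    rw [Finset.sum_eq_single 0]
    · simp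
    · intro b _ hb
      have : (0 : ℕ).choose b = 0 := Nat.choose_eq_zero_of_lt (Nat.pos_of_ne_zero hb)
      simp [this]
    · intro h; simp at h
  | succ j ih =>
    calc R₂ ^ (j + 1) * R₁ ^ i = R₂ * (R₂ ^ j * R₁ ^ i) := by rw [pow_succ', mul_assoc]
    _ = ∑ k ∈ Finset.range (i + 1),
          (k.factorial * i.choose k * j.choose k) • (R₂ * (R₃ ^ k * R₁ ^ (i - k) * R₂ ^ (j - k))) := by
        rw [ih, Finset.mul_sum]; simp only [mul_smul_comm]
    _ = ∑ k ∈ Finset.range (i + 1),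
          ((k.factorial * i.choose k * j.choose k) • (R₃ ^ k * R₁ ^ (i - k) * R₂ ^ (j + 1 - k))
            + ((i - k) * (k.factorial * i.choose k * j.choose k)) •
                (R₃ ^ (k + 1) * R₁ ^ (i - (k + 1)) * R₂ ^ (j + 1 - (k + 1)))) :=
        Finset.sum_congr rfl fun k _ => my_term R₁ R₂ R₃ h12 h13 h23 i j k
    _ = (∑ k ∈ Finset.range (i + 1),
          (k.factorial * i.choose k * j.choose k) • (R₃ ^ k * R₁ ^ (i - k) * R₂ ^ (j + 1 - k)))
          + ∑ k ∈ Finset.range (i + 1),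
            ((i - k) * (k.factorial * i.choose k * j.choose k)) •
                (R₃ ^ (k + 1) * R₁ ^ (i - (k + 1)) * R₂ ^ (j + 1 - (k + 1))) :=
        Finset.sum_add_distrib
    _ = ∑ k ∈ Finset.range (i + 1),
          (k.factorial * i.choose k * (j + 1).choose k) • (R₃ ^ k * R₁ ^ (i - k) * R₂ ^ (j + 1 - k)) := by
        rw [Finset.sum_range_succ' (fun k =>
          (k.factorial * i.choose k * (j + 1).choose k) • (R₃ ^ k * R₁ ^ (i - k) * R₂ ^ (j + 1 - k))) i]
        rw [Finset.sum_range_succ' (fun k =>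
          (k.factorial * i.choose k * j.choose k) • (R₃ ^ k * R₁ ^ (i - k) * R₂ ^ (j + 1 - k))) i]
        rw [Finset.sum_range_succ (fun k =>
          ((i - k) * (k.factorial * i.choose k * j.choose k)) •
            (R₃ ^ (k + 1) * R₁ ^ (i - (k + 1)) * R₂ ^ (j + 1 - (k + 1)))) i]
        simp only [Nat.sub_self, zero_mul, zero_smul, add_zero]
        rw [add_right_comm]
        congr 1
        · rw [← Finset.sum_add_distrib]
          refine Finset.sum_congr rfl fun k _ => ?_
          rw [← add_smul]
          congr 1
          exact (my_coeff i j k).symm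
        · simp

theorem stmt_4 {R : Type*} [Ring R] (R₁ R₂ R₃ : R)
    (h12 : R₁ * R₂ - R₂ * R₁ = -R₃)
    (h13 : R₁ * R₃ - R₃ * R₁ = 0)
    (h23 : R₂ * R₃ - R₃ * R₂ = 0)
    (i j : ℕ) (hi : 0 < i) (hj : 0 < j) :
    R₂ ^ j * R₁ ^ i - R₁ ^ i * R₂ ^ j =
      ∑ k ∈ Finset.Icc 1 (min i j),
        (k.factorial * i.choose k * j.choose k) •
          (R₃ ^ k * R₁ ^ (i - k) * R₂ ^ (j - k)) := by
  rw [my_main R₁ R₂ R₃ h12 h13 h23 i j]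
  have hsplit : Finset.range (i + 1) = insert 0 (Finset.Icc 1 i) := by
    ext x; simp; omega
  rw [hsplit, Finset.sum_insert (by simp)]
  simp only [Nat.factorial_zero, Nat.choose_zero_right, Nat.mul_one, Nat.one_mul, pow_zero,
    one_mul, Nat.sub_zero, one_smul]
  rw [add_sub_cancel_left]
  refine (Finset.sum_subset ?_ ?_).symm
  · exact Finset.Icc_subset_Icc_right (min_le_left i j)
  · intro x hx hx'
    simp only [Finset.mem_Icc] at hx hx'
    have : j < x := by omega
    simp [Nat.choose_eq_zero_of_lt this]
end

section
/- Let R₁, R₂, R₃ be elements of an associative ring satisfying [R₁, R₂] = -R₃, [R₁, R₃] = 0, and [R₂, R₃] = 0. Then for positive integers i, j, [R₁^i, R₂^j] = Σ_{k=1}^{min(i,j)} (-1)^k · k! · C(i,k) · C(j,k) · R₃^k R₂^{j-k} R₁^{i-k}. -/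
/-!
Left multiplication by `x` splits as `ad x + R_x`, with `R_x` right multiplication by `x`,
and the two summands commute, so the binomial theorem gives `x ^ i * b = ∑ C(i,k) (ad x)^k(b) x^(i-k)`. Since `ad x` is a derivation sending
`y` to `-z` and `z` commutes with `x` and `y`, one gets
`(ad x)^k (y ^ j) = (-1)^k j!/(j-k)! z^k y^(j-k)`. The `k = 0` term is `y ^ j * x ^ i`, and the
terms with `k > j` vanish.
-/

open Finset LinearMap

namespace Ring

variable {A : Type*} [Ring A]

def ad (x : A) : Module.End ℤ A := mulLeft ℤ x - mulRight ℤ x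

@[simp]
theorem ad_apply (x b : A) : ad x b = x * b - b * x := rfl

theorem ad_mul_of_commute {x c : A} (h : Commute x c) (b : A) : ad x (c * b) = c * ad x b := by
  simp only [ad_apply, mul_sub, ← mul_assoc, h.eq]

theorem ad_pow_of_commute {x y : A} (h : Commute y (ad x y)) (m : ℕ) :
    ad x (y ^ m) = m • (ad x y * y ^ (m - 1)) := by
  induction m with
  | zero => simp
  | succ m ih =>
    have hsucc : ad x (y ^ (m + 1)) = ad x (y ^ m) * y + y ^ m * ad x y := by
      simp only [ad_apply, pow_succ]; noncomm_ring
    rw [hsucc, ih]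
    rcases m with _ | m
    · simp
    · simp only [Nat.add_sub_cancel]
      rw [smul_mul_assoc, mul_assoc, ← pow_succ, (h.pow_left _).eq, ← succ_nsmul]

theorem pow_mul_eq_sum_ad_pow (x b : A) (n : ℕ) :
    x ^ n * b = ∑ k ∈ range (n + 1), n.choose k • ((ad x ^ k) b * x ^ (n - k)) := by
  have hcomm : Commute (ad x) (mulRight ℤ x) :=
    (commute_mulLeft_right x x).sub_left (Commute.refl _)
  have hsplit : mulLeft ℤ x = ad x + mulRight ℤ x := (sub_add_cancel _ _).symm
  have := congr($(hcomm.add_pow n) b)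
  rw [← hsplit, pow_mulLeft, mulLeft_apply] at this
  rw [this, LinearMap.sum_apply]
  refine sum_congr rfl fun k _ => ?_
  rw [(hcomm.pow_pow k (n - k)).eq, Module.End.mul_apply, Module.End.natCast_apply,
    Module.End.mul_apply, pow_mulRight, mulRight_apply, map_nsmul, smul_mul_assoc]

theorem ad_pow_apply_pow {x y z : A} (hxy : ad x y = -z) (hxz : Commute x z)
    (hyz : Commute y z) (k m : ℕ) :
    (ad x ^ k) (y ^ m) = ((-1) ^ k * m.descFactorial k : ℤ) • (z ^ k * y ^ (m - k)) := by
  induction k with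
  | zero => simp
  | succ k ih =>
    have hy : Commute y (ad x y) := hxy ▸ hyz.neg_right
    rw [pow_succ', Module.End.mul_apply, ih, map_zsmul, ad_mul_of_commute (hxz.pow_right k),
      ad_pow_of_commute hy, hxy, Nat.sub_sub, Nat.descFactorial_succ, mul_smul_comm, neg_mul,
      mul_neg, ← mul_assoc, ← pow_succ, ← natCast_zsmul]
    push_cast
    module

theorem pow_mul_pow_eq_sum {x y z : A} (hxy : ad x y = -z) (hxz : Commute x z)
    (hyz : Commute y z) (i j : ℕ) :
    x ^ i * y ^ j = ∑ k ∈ range (i + 1),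
      ((-1 : ℤ) ^ k * k.factorial * i.choose k * j.choose k) •
        (z ^ k * y ^ (j - k) * x ^ (i - k)) := by
  rw [pow_mul_eq_sum_ad_pow]
  refine sum_congr rfl fun k _ => ?_
  rw [ad_pow_apply_pow hxy hxz hyz, Nat.descFactorial_eq_factorial_mul_choose, smul_mul_assoc,
    ← natCast_zsmul, smul_smul]
  congr 1
  push_cast
  ring

end Ring

theorem stmt_5_general {R : Type*} [Ring R] (R₁ R₂ R₃ : R)
    (h12 : R₁ * R₂ - R₂ * R₁ = -R₃)
    (h13 : R₁ * R₃ - R₃ * R₁ = 0)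
    (h23 : R₂ * R₃ - R₃ * R₂ = 0)
    (i j : ℕ) :
    R₁ ^ i * R₂ ^ j - R₂ ^ j * R₁ ^ i =
      ∑ k ∈ Finset.Icc 1 (min i j),
        ((-1 : ℤ) ^ k * k.factorial * i.choose k * j.choose k) •
          (R₃ ^ k * R₂ ^ (j - k) * R₁ ^ (i - k)) := by
  have hvanish : ∀ k ∈ Icc 1 i, k ∉ Icc 1 (min i j) →
      ((-1 : ℤ) ^ k * k.factorial * i.choose k * j.choose k) •
        (R₃ ^ k * R₂ ^ (j - k) * R₁ ^ (i - k)) = 0 := by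
    intro k hk hk'
    simp only [mem_Icc] at hk hk'
    simp [Nat.choose_eq_zero_of_lt (by omega : j < k)]
  rw [Ring.pow_mul_pow_eq_sum h12 (sub_eq_zero.mp h13) (sub_eq_zero.mp h23), range_eq_Ico,
    sum_eq_sum_Ico_succ_bot i.add_one_pos, zero_add, Ico_add_one_right_eq_Icc,
    sum_subset (Icc_subset_Icc_right (min_le_left i j)) hvanish]
  simp

theorem stmt_5 {R : Type*} [Ring R] (R₁ R₂ R₃ : R)
    (h12 : R₁ * R₂ - R₂ * R₁ = -R₃)
    (h13 : R₁ * R₃ - R₃ * R₁ = 0)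
    (h23 : R₂ * R₃ - R₃ * R₂ = 0)
    (i j : ℕ) (hi : 0 < i) (hj : 0 < j) :
    R₁ ^ i * R₂ ^ j - R₂ ^ j * R₁ ^ i =
      ∑ k ∈ Finset.Icc 1 (min i j),
        ((-1 : ℤ) ^ k * k.factorial * i.choose k * j.choose k) •
          (R₃ ^ k * R₂ ^ (j - k) * R₁ ^ (i - k)) :=
  stmt_5_general R₁ R₂ R₃ h12 h13 h23 i j
end

section
/- For every nonnegative integer d, (1/4) · Σ_{ℓ=0}^{⌊d/3⌋} Σ_{m=0}^{⌊(d-3ℓ)/2⌋} (d-3ℓ-2m+1)² (m+1)² (d-3ℓ-m+2)² = C(d+8, 8). -/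
-- polynomial value of 210 * inner sum
private def Qp (n k : ℤ) : ℤ :=
  840 - 484*k + 2170*k^3 - 966*k^5 + 120*k^7 + 2520*n - 546*n*k - 3255*n*k^2
  + 2310*n*k^3 + 2415*n*k^4 - 504*n*k^5 - 420*n*k^6 + 2730*n^2 + 1379*n^2*k
  - 3465*n^2*k^2 - 1400*n^2*k^3 + 1260*n^2*k^4 + 546*n^2*k^5 + 1260*n^3
  + 1680*n^3*k - 315*n^3*k^2 - 1050*n^3*k^3 - 315*n^3*k^4 + 210*n^4
  + 455*n^4*k + 315*n^4*k^2 + 70*n^4*k^3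

private theorem sumP (k : ℕ) (n : ℤ) :
    210 * ∑ m ∈ Finset.range (k+1),
      ((n - 2*(m:ℤ) + 1)^2 * ((m:ℤ)+1)^2 * (n - (m:ℤ) + 2)^2) = Qp n k := by
  induction k with
  | zero => simp [Qp]; ring
  | succ k ih =>
    rw [Finset.sum_range_succ, mul_add, ih]
    simp only [Qp]
    push_cast
    ring

private theorem choosePoly (d : ℕ) : 40320 * (d+8).choose 8 =
    (d+1)*(d+2)*(d+3)*(d+4)*(d+5)*(d+6)*(d+7)*(d+8) := by
  have h := Nat.descFactorial_eq_factorial_mul_choose (d+8) 8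
  have h2 : (d+8).descFactorial 8 = (d+1)*(d+2)*(d+3)*(d+4)*(d+5)*(d+6)*(d+7)*(d+8) := by
    simp [Nat.descFactorial_succ, Nat.descFactorial_zero]
    ring
  rw [h2] at h
  have h3 : Nat.factorial 8 = 40320 := by decide
  rw [h3] at h
  omega

private theorem gcast (n k : ℕ) (h : 2*k ≤ n) :
    ((∑ m ∈ Finset.range (k+1), (n - 2*m + 1)^2*(m+1)^2*(n - m + 2)^2 : ℕ) : ℤ)
      = ∑ m ∈ Finset.range (k+1),
          (((n:ℤ) - 2*(m:ℤ) + 1)^2 * ((m:ℤ)+1)^2 * ((n:ℤ) - (m:ℤ) + 2)^2) := by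
  rw [Nat.cast_sum]
  refine Finset.sum_congr rfl fun m hm => ?_
  simp only [Finset.mem_range] at hm
  have h1 : 2*m ≤ n := by omega
  have h2 : m ≤ n := by omega
  push_cast [Nat.cast_sub h1, Nat.cast_sub h2]
  ring

theorem stmt_9 (d : ℕ) :
    ∑ ℓ ∈ Finset.range (d / 3 + 1), ∑ m ∈ Finset.range ((d - 3 * ℓ) / 2 + 1),
        (d - 3 * ℓ - 2 * m + 1) ^ 2 * (m + 1) ^ 2 * (d - 3 * ℓ - m + 2) ^ 2 =
      4 * (d + 8).choose 8 := by
  induction d using Nat.strong_induction_on with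
  | _ d ih =>
  by_cases hd : d < 3
  · interval_cases d <;> decide
  · obtain ⟨e, rfl⟩ : ∃ e, d = e + 3 := ⟨d - 3, by omega⟩
    have hdiv : (e + 3) / 3 + 1 = (e / 3 + 1) + 1 := by omega
    rw [hdiv, Finset.sum_range_succ']
    have hre : ∀ ℓ ∈ Finset.range (e / 3 + 1),
        ∑ m ∈ Finset.range ((e + 3 - 3 * (ℓ+1)) / 2 + 1),
          (e + 3 - 3 * (ℓ+1) - 2 * m + 1) ^ 2 * (m + 1) ^ 2
            * (e + 3 - 3 * (ℓ+1) - m + 2) ^ 2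
        = ∑ m ∈ Finset.range ((e - 3 * ℓ) / 2 + 1),
          (e - 3 * ℓ - 2 * m + 1) ^ 2 * (m + 1) ^ 2 * (e - 3 * ℓ - m + 2) ^ 2 := by
      intro ℓ _
      rw [show e + 3 - 3 * (ℓ+1) = e - 3 * ℓ by omega]
    rw [Finset.sum_congr rfl hre, ih e (by omega)]
    simp only [Nat.mul_zero, Nat.sub_zero]
    obtain ⟨k, r, hr2, hkr⟩ : ∃ k r, r < 2 ∧ e + 3 = 2*k + r :=
      ⟨(e+3)/2, (e+3)%2, by omega, by omega⟩
    rw [show (e+3)/2 = k by omega]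
    have hg := gcast (e+3) k (by omega)
    have hS := sumP k ((e+3 : ℕ) : ℤ)
    have c1 := choosePoly e
    have c2 := choosePoly (e+3)
    zify at c1 c2
    simp only [Qp] at hS
    refine Nat.cast_inj (R := ℤ) |>.mp ?_
    rw [Nat.cast_add, Nat.cast_mul, Nat.cast_mul, hg, Nat.cast_ofNat]
    apply mul_left_cancel₀ (show (8467200:ℤ) ≠ 0 by norm_num)
    push_cast at hS c1 c2 ⊢
    interval_cases r
    · have he : (e:ℤ) = 2*(k:ℤ) - 3 := by omega
      rw [he] at hS c1 c2 ⊢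
      linear_combination 40320 * hS + 840 * c1 - 840 * c2
    · have he : (e:ℤ) = 2*(k:ℤ) - 2 := by omega
      rw [he] at hS c1 c2 ⊢
      linear_combination 40320 * hS + 840 * c1 - 840 * c2
end

section
/- In Mat₉(ℂ) = Mat₃(ℂ) ⊗ Mat₃(ℂ), let f = e₁₂ ⊗ e₂₃ - e₁₃ ⊗ e₂₂ + e₂₃ ⊗ e₁₂ - e₂₂ ⊗ e₁₃, and for scalars s, t, u let N₂ = N₁ ⊗ I₃ + I₃ ⊗ N₁ with N₁ = s·e₁₂ + u·e₁₃ + t·e₂₃, and D₂ = D₁ ⊗ I₃ + I₃ ⊗ D₁ with D₁ = s·e₁₁ + (t-s)·e₂₂ - t·e₃₃. Then N₂·f = 0, f·N₂ = 0, and D₂·f = t·f. -/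
/-!
Write `b₁, b₂, b₃` for the standard basis of `ℂ³` (`b 0, b 1, b 2` below). Then
`f = (b₁ ∧ b₂)(b₂ ∧ b₃)ᵀ` with `u ∧ v = u ⊗ v - v ⊗ u`, and a Kronecker sum `A ⊗ 1 + 1 ⊗ A`
acts on `u ∧ v` by the Leibniz rule `Au ∧ v + u ∧ Av`, from either side. Since `N₁b₁ = 0` and
`N₁b₂ = s b₁`, we get `N₂(b₁ ∧ b₂) = b₁ ∧ s b₁ = 0`; dually `b₂ᵀN₁ = t b₃ᵀ` and `b₃ᵀN₁ = 0`
give `(b₂ ∧ b₃)ᵀN₂ = 0`. Finally `b₁, b₂` are eigenvectors of `D₁` with eigenvalues `s` and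
`t - s`, so `b₁ ∧ b₂` is one of `D₂` with eigenvalue `t`.
-/

open Kronecker

namespace Matrix

variable {m R : Type*} [CommRing R]

def wedge (u v : m → R) : m × m → R := fun p => u p.1 * v p.2 - v p.1 * u p.2

@[simp]
lemma wedge_self (u : m → R) : wedge u u = 0 := by
  ext p; simp [wedge]

@[simp]
lemma wedge_zero_left (v : m → R) : wedge 0 v = 0 := by
  ext p; simp [wedge]

@[simp]
lemma wedge_zero_right (u : m → R) : wedge u 0 = 0 := by
  ext p; simp [wedge]

@[simp]
lemma wedge_smul_left (c : R) (u v : m → R) : wedge (c • u) v = c • wedge u v := by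
  ext p; simp only [wedge, Pi.smul_apply, smul_eq_mul]; ring

@[simp]
lemma wedge_smul_right (c : R) (u v : m → R) : wedge u (c • v) = c • wedge u v := by
  ext p; simp only [wedge, Pi.smul_apply, smul_eq_mul]; ring

lemma vecMulVec_wedge_wedge (a b c d : m → R) :
    vecMulVec (wedge a b) (wedge c d) =
      vecMulVec a c ⊗ₖ vecMulVec b d - vecMulVec a d ⊗ₖ vecMulVec b c
        + vecMulVec b d ⊗ₖ vecMulVec a c - vecMulVec b c ⊗ₖ vecMulVec a d := by
  ext ⟨i, k⟩ ⟨j, l⟩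
  simp only [wedge, vecMulVec_apply, sub_apply, add_apply, kronecker_apply]
  ring

variable [Fintype m] [DecidableEq m]

lemma kronecker_one_mulVec_apply (A : Matrix m m R) (w : m × m → R) (i k : m) :
    ((A ⊗ₖ 1) *ᵥ w) (i, k) = ∑ j, A i j * w (j, k) := by
  simp [mulVec, dotProduct, Fintype.sum_prod_type, one_apply]

lemma one_kronecker_mulVec_apply (A : Matrix m m R) (w : m × m → R) (i k : m) :
    ((1 ⊗ₖ A) *ᵥ w) (i, k) = ∑ l, A k l * w (i, l) := by
  simp [mulVec, dotProduct, Fintype.sum_prod_type, one_apply]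

lemma kronecker_one_add_one_kronecker_mulVec_wedge (A : Matrix m m R) (u v : m → R) :
    (A ⊗ₖ 1 + 1 ⊗ₖ A) *ᵥ wedge u v = wedge (A *ᵥ u) v + wedge u (A *ᵥ v) := by
  ext ⟨i, k⟩
  rw [add_mulVec, Pi.add_apply, kronecker_one_mulVec_apply, one_kronecker_mulVec_apply]
  simp only [wedge, mulVec, dotProduct, Pi.add_apply, mul_sub, Finset.sum_sub_distrib,
    Finset.sum_mul, Finset.mul_sum]
  simp only [mul_comm, mul_left_comm]
  ring

lemma wedge_vecMul_kronecker_one_add_one_kronecker (A : Matrix m m R) (u v : m → R) :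
    wedge u v ᵥ* (A ⊗ₖ 1 + 1 ⊗ₖ A) = wedge (u ᵥ* A) v + wedge u (v ᵥ* A) := by
  rw [← mulVec_transpose, ← mulVec_transpose, ← mulVec_transpose, transpose_add,
    ← kroneckerMap_transpose, ← kroneckerMap_transpose, transpose_one,
    kronecker_one_add_one_kronecker_mulVec_wedge]

end Matrix

open Matrix

theorem stmt_14 (s t u : ℂ)
    (e : Fin 3 → Fin 3 → Matrix (Fin 3) (Fin 3) ℂ)
    (he : ∀ i j, e i j = Matrix.single i j 1)
    (N₁ D₁ : Matrix (Fin 3) (Fin 3) ℂ)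
    (hN₁ : N₁ = s • e 0 1 + u • e 0 2 + t • e 1 2)
    (hD₁ : D₁ = s • e 0 0 + (t - s) • e 1 1 - t • e 2 2)
    (f N₂ D₂ : Matrix (Fin 3 × Fin 3) (Fin 3 × Fin 3) ℂ)
    (hf : f = e 0 1 ⊗ₖ e 1 2 - e 0 2 ⊗ₖ e 1 1 + e 1 2 ⊗ₖ e 0 1 - e 1 1 ⊗ₖ e 0 2)
    (hN₂ : N₂ = N₁ ⊗ₖ (1 : Matrix (Fin 3) (Fin 3) ℂ) + (1 : Matrix (Fin 3) (Fin 3) ℂ) ⊗ₖ N₁)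
    (hD₂ : D₂ = D₁ ⊗ₖ (1 : Matrix (Fin 3) (Fin 3) ℂ) + (1 : Matrix (Fin 3) (Fin 3) ℂ) ⊗ₖ D₁) :
    N₂ * f = 0 ∧ f * N₂ = 0 ∧ D₂ * f = t • f := by
  set b : Fin 3 → Fin 3 → ℂ := fun i => Pi.single i 1
  have hf_outer : f = vecMulVec (wedge (b 0) (b 1)) (wedge (b 1) (b 2)) := by
    simp only [hf, he, vecMulVec_wedge_wedge, b, single_eq_single_vecMulVec_single]
  simp only [he] at hN₁ hD₁
  have hN_b0 : N₁ *ᵥ b 0 = 0 := by ext i; fin_cases i <;> simp [hN₁, b]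
  have hN_b1 : N₁ *ᵥ b 1 = s • b 0 := by ext i; fin_cases i <;> simp [hN₁, b]
  have hb1_N : b 1 ᵥ* N₁ = t • b 2 := by ext i; fin_cases i <;> simp [hN₁, b]
  have hb2_N : b 2 ᵥ* N₁ = 0 := by ext i; fin_cases i <;> simp [hN₁, b]
  have hD_b0 : D₁ *ᵥ b 0 = s • b 0 := by ext i; fin_cases i <;> simp [hD₁, b]
  have hD_b1 : D₁ *ᵥ b 1 = (t - s) • b 1 := by ext i; fin_cases i <;> simp [hD₁, b]
  refine ⟨?_, ?_, ?_⟩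
  · rw [hN₂, hf_outer, mul_vecMulVec, kronecker_one_add_one_kronecker_mulVec_wedge, hN_b0, hN_b1]
    simp
  · rw [hN₂, hf_outer, vecMulVec_mul, wedge_vecMul_kronecker_one_add_one_kronecker, hb1_N, hb2_N]
    simp
  · rw [hD₂, hf_outer, mul_vecMulVec, kronecker_one_add_one_kronecker_mulVec_wedge, hD_b0, hD_b1,
      wedge_smul_left, wedge_smul_right, ← add_smul, smul_vecMulVec, add_sub_cancel]
end
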